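/- Under the stated block hypotheses, the diagonal blocks of B are given by F_{ii} = ω^{i + 1/m} · (1 − (2𝕚/d) sin(π/m) ω^{−d/(2m)}) · 1_D for every i = 0,…,d−1, where 𝕚 is the imaginary unit and 1_D is the D×D identity matrix. -/

import Mathlib

open Matrix Kronecker

/-- `omg d t` is ω^t = exp(2πi·t/d), where ω = exp(2πi/d). -/
noncomputable def omg (d : ℕ) (t : ℝ) : ℂ :=
  Complex.exp ((2 * Real.pi * t / d : ℝ) * Complex.I)

/-- The coefficient a_k = ω^{(2k−d)/(4m)} / (2 cos(π/(2m))). -/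
noncomputable def acoef (d m k : ℕ) : ℂ :=
  omg d ((2 * (k : ℝ) - d) / (4 * m)) / ((2 * Real.cos (Real.pi / (2 * m)) : ℝ) : ℂ)

/-- `abar d m A B k` is Ābar^{(k)} = a_k A^k + conj(a_k) B^k. -/
noncomputable def abar {n : Type*} [Fintype n] [DecidableEq n] (d m : ℕ)
    (A B : Matrix n n ℂ) (k : ℕ) : Matrix n n ℂ :=
  acoef d m k • A ^ k + (starRingEnd ℂ) (acoef d m k) • B ^ k

/-- Z_d = diag(1, ω, …, ω^{d−1}). -/
noncomputable def Zmat (d : ℕ) : Matrix (Fin d) (Fin d) ℂ :=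
  Matrix.diagonal fun i => omg d (i : ℝ)

lemma omg_mul (d : ℕ) {x y z : ℝ} (h : x + y = z) : omg d x * omg d y = omg d z := by
  unfold omg
  rw [← Complex.exp_add]
  congr 1
  rw [← h]
  push_cast
  ring

lemma omg_zero (d : ℕ) : omg d 0 = 1 := by
  unfold omg
  norm_num

lemma omg_ne_zero (d : ℕ) (t : ℝ) : omg d t ≠ 0 := Complex.exp_ne_zero _

lemma omg_pow (d n : ℕ) (t : ℝ) : omg d t ^ n = omg d (n * t) := by
  unfold omg
  rw [← Complex.exp_nat_mul]
  congr 1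
  push_cast
  ring

/-- The diagonal blocks of B are
F_{ii} = ω^{i+1/m} (1 − (2i/d) sin(π/m) ω^{−d/(2m)}) · 1_D. -/
theorem stmt7 (d m D : ℕ) (hd : 2 ≤ d) (hm : 2 ≤ m) (hD : 1 ≤ D)
    (B : Matrix (Fin d × Fin D) (Fin d × Fin D) ℂ)
    (hB : B ∈ Matrix.unitaryGroup (Fin d × Fin D) ℂ) (hBd : B ^ d = 1)
    (F : Fin d → Fin d → Matrix (Fin D) (Fin D) ℂ)
    (hF : ∀ (i j : Fin d) (p q : Fin D), B (i, p) (j, q) = F i j p q)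
    (hrel1 : ∀ k, 1 ≤ k → k ≤ d - 1 →
      abar d m (Zmat d ⊗ₖ (1 : Matrix (Fin D) (Fin D) ℂ)) B k *
        abar d m (Zmat d ⊗ₖ (1 : Matrix (Fin D) (Fin D) ℂ)) B (d - k) = 1)
    (hrel2 : ∀ k, 1 ≤ k → k ≤ d - 1 →
      abar d m (Zmat d ⊗ₖ (1 : Matrix (Fin D) (Fin D) ℂ)) B k =
        (abar d m (Zmat d ⊗ₖ (1 : Matrix (Fin D) (Fin D) ℂ)) B 1) ^ k) :
    ∀ i : Fin d,
      F i i = (omg d ((i : ℝ) + 1 / m) *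
        (1 - (2 * Complex.I / d) * (Real.sin (Real.pi / m) : ℂ) * omg d (-((d : ℝ) / (2 * m))))) •
        (1 : Matrix (Fin D) (Fin D) ℂ) := by
  intro i
  obtain ⟨e, rfl⟩ : ∃ e, d = e + 2 := ⟨d - 2, by omega⟩
  have hm0 : (m : ℝ) ≠ 0 := Nat.cast_ne_zero.2 (by omega)
  have hd0 : ((e : ℝ) + 2) ≠ 0 := by positivity
  have hd0' : ((e + 2 : ℕ) : ℝ) ≠ 0 := by push_cast; exact hd0
  have hdC : ((e : ℂ) + 2) ≠ 0 := by
    have : (0:ℝ) < (e:ℝ) + 2 := by positivity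
    simp only [ne_eq]
    intro h
    have := congrArg Complex.re h
    simp at this
    linarith
  -- basic scalars
  set u : ℂ := omg (e + 2) (1 / (4 * (m : ℝ))) with hu_def
  have hu0 : u ≠ 0 := omg_ne_zero _ _
  have hupow : ∀ n : ℕ, u ^ n = omg (e + 2) ((n : ℝ) / (4 * m)) := by
    intro n
    rw [hu_def, omg_pow]
    congr 1
    ring
  set W : ℂ := omg (e + 2) ((i : ℝ)) with hW_def
  have hW0 : W ≠ 0 := omg_ne_zero _ _
  have hWd : W ^ (e + 2) = 1 := by
    rw [hW_def, omg_pow]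
    unfold omg
    rw [show (2 * Real.pi * (((e + 2 : ℕ) : ℝ) * ((i : Fin (e+2)) : ℝ)) / ((e + 2 : ℕ) : ℝ) : ℝ)
        = ((i : ℕ) : ℝ) * (2 * Real.pi) from by field_simp [hd0']]
    rw [show ((((i : ℕ) : ℝ) * (2 * Real.pi) : ℝ) : ℂ) * Complex.I
        = (((i : ℕ) : ℤ) : ℂ) * (2 * (Real.pi : ℂ) * Complex.I) from by push_cast; ring]
    exact Complex.exp_int_mul_two_pi_mul_I _
  -- cosine facts
  have hcos_pos : 0 < Real.cos (Real.pi / (2 * m)) := by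
    apply Real.cos_pos_of_mem_Ioo
    constructor
    · have h1 : 0 < Real.pi / (2 * (m : ℝ)) := by positivity
      linarith [Real.pi_pos]
    · have h2 : (2 : ℝ) ≤ (m : ℝ) := by exact_mod_cast hm
      exact div_lt_div_of_pos_left Real.pi_pos (by norm_num) (by linarith)
  have cC0 : ((2 * Real.cos (Real.pi / (2 * m)) : ℝ) : ℂ) ≠ 0 := by
    rw [Complex.ofReal_ne_zero]
    positivity
  have hcC : ((2 * Real.cos (Real.pi / (2 * m)) : ℝ) : ℂ) * u ^ (e + 2) = u ^ (2 * (e + 2)) + 1 := by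
    have hx : u ^ (e + 2) = Complex.exp (((Real.pi / (2 * m) : ℝ) : ℂ) * Complex.I) := by
      rw [hupow]
      unfold omg
      rw [show (2 * Real.pi * (((e + 2 : ℕ) : ℝ) / (4 * (m:ℝ))) / ((e + 2 : ℕ) : ℝ) : ℝ)
          = Real.pi / (2 * m) from by field_simp [hd0']; ring]
    set θ : ℂ := ((Real.pi / (2 * m) : ℝ) : ℂ) with hθ
    have h1 := Complex.exp_mul_I θ
    have h2 := Complex.exp_mul_I (-θ)
    rw [Complex.cos_neg, Complex.sin_neg] at h2
    have h3 : Complex.exp (θ * Complex.I) * Complex.exp (-θ * Complex.I) = 1 := by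
      rw [← Complex.exp_add]
      ring_nf
      exact Complex.exp_zero
    have hcast : ((2 * Real.cos (Real.pi / (2 * m)) : ℝ) : ℂ) = 2 * Complex.cos θ := by
      simp only [Complex.ofReal_mul, Complex.ofReal_ofNat, Complex.ofReal_cos, hθ]
    rw [hcast]
    linear_combination (2 * Complex.cos θ - u ^ (e + 2) - Complex.exp (θ * Complex.I)) * hx
      + (-(Complex.exp (θ * Complex.I))) * h1 + (-(Complex.exp (θ * Complex.I))) * h2 + h3
  -- the key coefficient relations
  have hdivc : ∀ x y : ℂ, x / ((2 * Real.cos (Real.pi / (2 * m)) : ℝ) : ℂ) *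
      (((2 * Real.cos (Real.pi / (2 * m)) : ℝ) : ℂ) * y) = x * y := by
    intro x y
    rw [show x / ((2 * Real.cos (Real.pi / (2 * m)) : ℝ) : ℂ) *
        (((2 * Real.cos (Real.pi / (2 * m)) : ℝ) : ℂ) * y)
        = x * y * (((2 * Real.cos (Real.pi / (2 * m)) : ℝ) : ℂ) / ((2 * Real.cos (Real.pi / (2 * m)) : ℝ) : ℂ)) from by ring,
      div_self cC0, mul_one]
  have hrA : ∀ n : ℕ, acoef (e + 2) m n * (u ^ (2 * (e + 2)) + 1) = u ^ (2 * n) := by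
    intro n
    rw [← hcC, acoef, hdivc, hupow (e + 2), hupow (2 * n)]
    apply omg_mul
    push_cast
    ring
  have hconj : ∀ n : ℕ, (starRingEnd ℂ) (acoef (e + 2) m n)
      = omg (e + 2) ((((e : ℝ) + 2) - 2 * n) / (4 * m)) / ((2 * Real.cos (Real.pi / (2 * m)) : ℝ) : ℂ) := by
    intro n
    unfold acoef omg
    rw [map_div₀]
    congr 1
    · rw [← Complex.exp_conj]
      congr 1
      simp only [_root_.map_mul, Complex.conj_ofReal, Complex.conj_I]
      push_cast
      ring
    · exact Complex.conj_ofReal _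
  have hrB : ∀ n : ℕ, (starRingEnd ℂ) (acoef (e + 2) m n) * (u ^ (2 * n) * (u ^ (2 * (e + 2)) + 1))
      = u ^ (2 * (e + 2)) := by
    intro n
    rw [hconj n, ← hcC,
      show omg (e + 2) ((((e : ℝ) + 2) - 2 * n) / (4 * m)) / ((2 * Real.cos (Real.pi / (2 * m)) : ℝ) : ℂ) *
          (u ^ (2 * n) * (((2 * Real.cos (Real.pi / (2 * m)) : ℝ) : ℂ) * u ^ (e + 2)))
        = omg (e + 2) ((((e : ℝ) + 2) - 2 * n) / (4 * m)) / ((2 * Real.cos (Real.pi / (2 * m)) : ℝ) : ℂ) *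
          (((2 * Real.cos (Real.pi / (2 * m)) : ℝ) : ℂ) * (u ^ (2 * n) * u ^ (e + 2))) from by ring,
      hdivc, hupow (2 * n), hupow (e + 2), hupow (2 * (e + 2))]
    rw [show omg (e+2) (((2*n : ℕ) : ℝ)/(4*m)) * omg (e+2) ((((e+2 : ℕ)) : ℝ)/(4*m))
        = omg (e+2) ((2*(n:ℝ) + ((e:ℝ)+2))/(4*m)) from omg_mul _ (by push_cast; ring)]
    rw [show omg (e+2) ((((e:ℝ)+2) - 2*n)/(4*m)) * omg (e+2) ((2*(n:ℝ) + ((e:ℝ)+2))/(4*m))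
        = omg (e+2) (((2*(e+2) : ℕ) : ℝ)/(4*m)) from omg_mul _ (by push_cast; ring)]
  -- matrix structure
  set A := Zmat (e + 2) ⊗ₖ (1 : Matrix (Fin D) (Fin D) ℂ) with hA_def
  have hdiagA : A = Matrix.diagonal (fun x : Fin (e + 2) × Fin D => omg (e + 2) ((x.1 : ℝ))) := by
    rw [hA_def]
    unfold Zmat
    rw [show (1 : Matrix (Fin D) (Fin D) ℂ) = Matrix.diagonal (fun _ => (1:ℂ)) from Matrix.diagonal_one.symm,
      Matrix.diagonal_kronecker_diagonal]
    exact congrArg Matrix.diagonal (funext fun x => mul_one _)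
  have hApow : ∀ n : ℕ, A ^ n = Matrix.diagonal (fun x : Fin (e + 2) × Fin D => omg (e + 2) ((x.1 : ℝ)) ^ n) := by
    intro n
    rw [hdiagA, Matrix.diagonal_pow]
    rfl
  have hAn : ∀ (n : ℕ) (p q : Fin D), (A ^ n) (i, p) (i, q) = W ^ n * (1 : Matrix (Fin D) (Fin D) ℂ) p q := by
    intro n p q
    rw [hApow n, Matrix.diagonal_apply]
    by_cases h : p = q
    · subst h
      rw [if_pos rfl, Matrix.one_apply_eq, mul_one, hW_def]
    · rw [if_neg (by simp [h]), Matrix.one_apply_ne h, mul_zero]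
  have hAB : ∀ (n : ℕ) (p q : Fin D), (A * B ^ n) (i, p) (i, q) = W * (B ^ n) (i, p) (i, q) := by
    intro n p q
    rw [hdiagA, Matrix.diagonal_mul, hW_def]
  have hBA : ∀ (n : ℕ) (p q : Fin D), (B * A ^ n) (i, p) (i, q) = W ^ n * B (i, p) (i, q) := by
    intro n p q
    rw [hApow n, Matrix.mul_diagonal, hW_def, mul_comm]
  have hone2 : ∀ p q : Fin D, (1 : Matrix (Fin (e + 2) × Fin D) (Fin (e + 2) × Fin D) ℂ) (i, p) (i, q)
      = (1 : Matrix (Fin D) (Fin D) ℂ) p q := by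
    intro p q
    by_cases h : p = q
    · subst h; rw [Matrix.one_apply_eq, Matrix.one_apply_eq]
    · rw [Matrix.one_apply_ne (by simp [h]), Matrix.one_apply_ne h]
  have hexpand : ∀ k : ℕ, abar (e + 2) m A B 1 * abar (e + 2) m A B k =
      (acoef (e + 2) m 1 * acoef (e + 2) m k) • (A ^ (k + 1))
      + (acoef (e + 2) m 1 * (starRingEnd ℂ) (acoef (e + 2) m k)) • (A * B ^ k)
      + ((starRingEnd ℂ) (acoef (e + 2) m 1) * acoef (e + 2) m k) • (B * A ^ k)
      + ((starRingEnd ℂ) (acoef (e + 2) m 1) * (starRingEnd ℂ) (acoef (e + 2) m k)) • (B ^ (k + 1)) := by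
    intro k
    simp only [abar, add_mul, mul_add, smul_mul_assoc, mul_smul_comm, smul_smul, pow_succ',
      pow_zero, mul_one, one_mul]
    module
  -- entrywise recursion equation
  have eqk : ∀ k, 1 ≤ k → k ≤ e → ∀ p q : Fin D,
      acoef (e + 2) m (k + 1) * (W ^ (k + 1) * (1 : Matrix (Fin D) (Fin D) ℂ) p q)
        + (starRingEnd ℂ) (acoef (e + 2) m (k + 1)) * (B ^ (k + 1)) (i, p) (i, q)
      = (acoef (e + 2) m 1 * acoef (e + 2) m k) * (W ^ (k + 1) * (1 : Matrix (Fin D) (Fin D) ℂ) p q)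
        + (acoef (e + 2) m 1 * (starRingEnd ℂ) (acoef (e + 2) m k)) * (W * (B ^ k) (i, p) (i, q))
        + ((starRingEnd ℂ) (acoef (e + 2) m 1) * acoef (e + 2) m k) * (W ^ k * B (i, p) (i, q))
        + ((starRingEnd ℂ) (acoef (e + 2) m 1) * (starRingEnd ℂ) (acoef (e + 2) m k)) * (B ^ (k + 1)) (i, p) (i, q) := by
    intro k hk1 hk2 p q
    have h : abar (e + 2) m A B (k + 1) = abar (e + 2) m A B 1 * abar (e + 2) m A B k := by
      rw [hrel2 (k + 1) (by omega) (by omega), hrel2 k (by omega) (by omega)]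
      exact pow_succ' _ k
    have h2 : (abar (e + 2) m A B (k + 1)) (i, p) (i, q)
        = (abar (e + 2) m A B 1 * abar (e + 2) m A B k) (i, p) (i, q) := by rw [h]
    rw [hexpand k] at h2
    simp only [abar, Matrix.add_apply, Matrix.smul_apply, smul_eq_mul] at h2
    rw [hAn (k + 1) p q, hAB k p q, hBA k p q] at h2
    linear_combination h2
  -- cleaned recursion
  have hR : ∀ k, 1 ≤ k → k ≤ e → ∀ p q : Fin D,
      (B ^ (k + 1)) (i, p) (i, q)
      = u ^ 4 * W * (B ^ k) (i, p) (i, q) + u ^ (4 * k) * W ^ k * B (i, p) (i, q)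
        - u ^ (4 * k + 4) * W ^ (k + 1) * (1 : Matrix (Fin D) (Fin D) ℂ) p q := by
    intro k hk1 hk2 p q
    have h := eqk k hk1 hk2 p q
    apply mul_left_cancel₀ (pow_ne_zero (2 * (e + 2) + 2 * k) hu0)
    linear_combination ((u ^ (2 * (e + 2)) + 1) ^ 2 * u ^ (4 * k + 2)) * h
      - ((u ^ (2 * (e + 2)) + 1) * u ^ (4 * k + 2) * (W ^ (k + 1) * (1 : Matrix (Fin D) (Fin D) ℂ) p q)) * (hrA (k + 1))
      - ((u ^ (2 * (e + 2)) + 1) * u ^ (2 * k) * ((B ^ (k + 1)) (i, p) (i, q))) * (hrB (k + 1))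
      + ((u ^ (2 * (e + 2)) + 1) * u ^ (4 * k + 2) * (acoef (e + 2) m k) * (W ^ (k + 1) * (1 : Matrix (Fin D) (Fin D) ℂ) p q)
          + (u ^ (2 * (e + 2)) + 1) * u ^ (4 * k + 2) * ((starRingEnd ℂ) (acoef (e + 2) m k)) * (W * (B ^ k) (i, p) (i, q))) * (hrA 1)
      + (u ^ (4 * k + 4) * (W ^ (k + 1) * (1 : Matrix (Fin D) (Fin D) ℂ) p q)
          + u ^ (2 * (e + 2) + 4 * k) * (W ^ k * B (i, p) (i, q))) * (hrA k)
      + ((u ^ (2 * (e + 2)) + 1) * u ^ (4 * k) * (acoef (e + 2) m k) * (W ^ k * B (i, p) (i, q))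
          + (u ^ (2 * (e + 2)) + 1) * u ^ (4 * k) * ((starRingEnd ℂ) (acoef (e + 2) m k)) * ((B ^ (k + 1)) (i, p) (i, q))) * (hrB 1)
      + (u ^ (2 * k + 4) * (W * (B ^ k) (i, p) (i, q))
          + u ^ (2 * (e + 2) + 2 * k) * ((B ^ (k + 1)) (i, p) (i, q))) * (hrB k)
  -- induction
  have hind : ∀ j, j ≤ e → ∀ p q : Fin D,
      (B ^ (j + 1)) (i, p) (i, q)
      = ((j : ℂ) + 1) * (u ^ (4 * j) * W ^ j * B (i, p) (i, q))
        - (j : ℂ) * (u ^ (4 * j + 4) * W ^ (j + 1) * (1 : Matrix (Fin D) (Fin D) ℂ) p q) := by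
    intro j
    induction j with
    | zero => intro _ p q; simp
    | succ n ih =>
      intro hn p q
      have hRn := hR (n + 1) (by omega) (by omega) p q
      have ihn := ih (by omega) p q
      push_cast
      linear_combination hRn + u ^ 4 * W * ihn
  -- closing equation
  have hclose0 : abar (e + 2) m A B 1 * abar (e + 2) m A B (e + 1) = 1 := by
    have h := hrel1 1 (by omega) (by omega)
    rwa [show e + 2 - 1 = e + 1 from rfl] at h
  have eqclose : ∀ p q : Fin D,
      (acoef (e + 2) m 1 * acoef (e + 2) m (e + 1)) * (W ^ (e + 2) * (1 : Matrix (Fin D) (Fin D) ℂ) p q)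
        + (acoef (e + 2) m 1 * (starRingEnd ℂ) (acoef (e + 2) m (e + 1))) * (W * (B ^ (e + 1)) (i, p) (i, q))
        + ((starRingEnd ℂ) (acoef (e + 2) m 1) * acoef (e + 2) m (e + 1)) * (W ^ (e + 1) * B (i, p) (i, q))
        + ((starRingEnd ℂ) (acoef (e + 2) m 1) * (starRingEnd ℂ) (acoef (e + 2) m (e + 1))) * (1 : Matrix (Fin D) (Fin D) ℂ) p q
      = (1 : Matrix (Fin D) (Fin D) ℂ) p q := by
    intro p q
    have h2 : (abar (e + 2) m A B 1 * abar (e + 2) m A B (e + 1)) (i, p) (i, q)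
        = (1 : Matrix (Fin (e + 2) × Fin D) (Fin (e + 2) × Fin D) ℂ) (i, p) (i, q) := by rw [hclose0]
    rw [hexpand (e + 1)] at h2
    simp only [show (e + 1) + 1 = e + 2 from rfl] at h2
    rw [hBd] at h2
    simp only [Matrix.add_apply, Matrix.smul_apply, smul_eq_mul] at h2
    rw [hAn (e + 2) p q, hAB (e + 1) p q, hBA (e + 1) p q, hone2 p q] at h2
    linear_combination h2
  -- cleared closing equation
  have CCl : ∀ p q : Fin D,
      u ^ (4 * (e + 2)) * (W ^ (e + 2) * (1 : Matrix (Fin D) (Fin D) ℂ) p q)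
        + u ^ (2 * (e + 2) + 4) * (W * (B ^ (e + 1)) (i, p) (i, q))
        + u ^ (2 * (e + 2) + 4 * e + 4) * (W ^ (e + 1) * B (i, p) (i, q))
        + u ^ (4 * (e + 2)) * (1 : Matrix (Fin D) (Fin D) ℂ) p q
      = (u ^ (2 * (e + 2)) + 1) ^ 2 * u ^ (2 * (e + 2)) * (1 : Matrix (Fin D) (Fin D) ℂ) p q := by
    intro p q
    have hcl := eqclose p q
    linear_combination ((u ^ (2 * (e + 2)) + 1) ^ 2 * u ^ (2 * (e + 2))) * hcl
      - ((u ^ (2 * (e + 2)) + 1) * u ^ (2 * (e + 2)) * (acoef (e + 2) m (e + 1)) * (W ^ (e + 2) * (1 : Matrix (Fin D) (Fin D) ℂ) p q)) * (hrA 1)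
      - (u ^ (2 * (e + 2) + 2) * (W ^ (e + 2) * (1 : Matrix (Fin D) (Fin D) ℂ) p q)) * (hrA (e + 1))
      - ((u ^ (2 * (e + 2)) + 1) * u ^ 2 * (acoef (e + 2) m 1) * (W * (B ^ (e + 1)) (i, p) (i, q))) * (hrB (e + 1))
      - (u ^ (2 * (e + 2) + 2) * (W * (B ^ (e + 1)) (i, p) (i, q))) * (hrA 1)
      - ((u ^ (2 * (e + 2)) + 1) * u ^ (2 * e + 2) * (acoef (e + 2) m (e + 1)) * (W ^ (e + 1) * B (i, p) (i, q))) * (hrB 1)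
      - (u ^ (2 * (e + 2) + 2 * e + 2) * (W ^ (e + 1) * B (i, p) (i, q))) * (hrA (e + 1))
      - ((u ^ (2 * (e + 2)) + 1) * u ^ (2 * e + 2) * ((starRingEnd ℂ) (acoef (e + 2) m (e + 1))) * ((1 : Matrix (Fin D) (Fin D) ℂ) p q)) * (hrB 1)
      - (u ^ (2 * (e + 2)) * ((1 : Matrix (Fin D) (Fin D) ℂ) p q)) * (hrB (e + 1))
  -- the star equation pinning down B's diagonal entries
  have hstar : ∀ p q : Fin D,
      ((e : ℂ) + 2) * (u ^ (4 * e + 4) * (W ^ (e + 1) * B (i, p) (i, q)))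
      = (((e : ℂ) + 1) * u ^ (4 * (e + 2)) + 1) * (1 : Matrix (Fin D) (Fin D) ℂ) p q := by
    intro p q
    have hin := hind e (le_refl e) p q
    apply mul_left_cancel₀ (pow_ne_zero (2 * (e + 2)) hu0)
    linear_combination CCl p q - (u ^ (2 * (e + 2) + 4) * W) * hin
      - ((u ^ (4 * (e + 2)) - (e : ℂ) * u ^ (6 * e + 12)) * (1 : Matrix (Fin D) (Fin D) ℂ) p q) * hWd
  -- final scalar identity
  have hdC : ((e + 2 : ℕ) : ℂ) ≠ 0 := Nat.cast_ne_zero.2 (by omega)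
  have h1 : W * u ^ 4 = omg (e + 2) ((i : ℝ) + 1 / m) := by
    rw [hupow 4, hW_def]
    apply omg_mul
    push_cast
    field_simp
  have h2 : omg (e + 2) (-(((e + 2 : ℕ) : ℝ) / (2 * m))) * u ^ (2 * (e + 2)) = 1 := by
    rw [hupow]
    rw [show omg (e+2) (-(((e + 2 : ℕ) : ℝ) / (2 * m))) * omg (e+2) (((2*(e+2) : ℕ) : ℝ)/(4*m)) = omg (e+2) 0 from
      omg_mul _ (by push_cast; field_simp; ring)]
    exact omg_zero _
  have h3 : ((Real.sin (Real.pi / (m : ℝ)) : ℝ) : ℂ) * (2 * Complex.I) * u ^ (2 * (e + 2))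
      = u ^ (4 * (e + 2)) - 1 := by
    have hx : u ^ (2 * (e + 2)) = Complex.exp (((Real.pi / (m : ℝ) : ℝ) : ℂ) * Complex.I) := by
      rw [hupow]
      unfold omg
      rw [show (2 * Real.pi * (((2 * (e + 2) : ℕ) : ℝ) / (4 * (m:ℝ))) / ((e + 2 : ℕ) : ℝ) : ℝ)
          = Real.pi / (m : ℝ) from by field_simp [hd0']; push_cast; ring]
    set θ : ℂ := ((Real.pi / (m : ℝ) : ℝ) : ℂ) with hθ
    have ha := Complex.exp_mul_I θ
    have hb := Complex.exp_mul_I (-θ)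
    rw [Complex.cos_neg, Complex.sin_neg] at hb
    have hc : Complex.exp (θ * Complex.I) * Complex.exp (-θ * Complex.I) = 1 := by
      rw [← Complex.exp_add]
      ring_nf
      exact Complex.exp_zero
    have hsin : ((Real.sin (Real.pi / (m : ℝ)) : ℝ) : ℂ) = Complex.sin θ := Complex.ofReal_sin _
    rw [hsin, show 4 * (e + 2) = (2 * (e + 2)) + (2 * (e + 2)) from by ring, pow_add, hx]
    linear_combination (-(Complex.exp (θ * Complex.I))) * ha + Complex.exp (θ * Complex.I) * hb - hc
  -- conclusion
  ext p q
  rw [Matrix.smul_apply, smul_eq_mul, ← hF i i p q]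
  have hC0 : ((e : ℂ) + 2) * (u ^ (4 * e + 4) * W ^ (e + 1)) ≠ 0 := by
    apply mul_ne_zero
    · have : ((e : ℂ) + 2) = ((e + 2 : ℕ) : ℂ) := by push_cast; ring
      rw [this]; exact hdC
    · exact mul_ne_zero (pow_ne_zero _ hu0) (pow_ne_zero _ hW0)
  have hTmul : (omg (e + 2) ((i : ℝ) + 1 / m) *
        (1 - (2 * Complex.I / ((e + 2 : ℕ) : ℂ)) * (Real.sin (Real.pi / m) : ℂ) *
          omg (e + 2) (-(((e + 2 : ℕ) : ℝ) / (2 * m)))))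
      * (((e : ℂ) + 2) * (u ^ (4 * e + 4) * W ^ (e + 1)))
      = ((e : ℂ) + 1) * u ^ (4 * (e + 2)) + 1 := by
    rw [← h1]
    apply mul_right_cancel₀ (pow_ne_zero (2 * (e + 2)) hu0)
    have hcast : ((e + 2 : ℕ) : ℂ) = (e : ℂ) + 2 := by push_cast; ring
    have hfrac : (2 * Complex.I / ((e + 2 : ℕ) : ℂ)) * ((e + 2 : ℕ) : ℂ) = 2 * Complex.I := by
      field_simp
    linear_combination
      ((2 * Complex.I / ((e + 2 : ℕ) : ℂ)) * (Real.sin (Real.pi / m) : ℂ) *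
          omg (e + 2) (-(((e + 2 : ℕ) : ℝ) / (2 * m))) * (W ^ (e + 2) * u ^ (6 * e + 12))) * hcast
      - ((Real.sin (Real.pi / m) : ℂ) * omg (e + 2) (-(((e + 2 : ℕ) : ℝ) / (2 * m))) *
          (W ^ (e + 2) * u ^ (6 * e + 12))) * hfrac
      - (2 * Complex.I * (Real.sin (Real.pi / m) : ℂ) * W ^ (e + 2) * u ^ (4 * e + 8)) * h2
      - (W ^ (e + 2) * u ^ (2 * e + 4)) * h3
      + (((e : ℂ) + 1) * u ^ (6 * e + 12) + u ^ (2 * e + 4)) * hWd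
  apply mul_left_cancel₀ hC0
  linear_combination hstar p q - ((1 : Matrix (Fin D) (Fin D) ℂ) p q) * hTmul
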